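/- arXiv:2605.05273 — 2 statements merged into one kernel-verified Lean document; each statement's English description precedes it below -/
import Mathlib

section
/- Let S1, S2, M, X be subsets of a type with S1 ⊆ M, S2 ⊆ M, M ⊆ X and S1 ∩ S2 = ∅. If M \ (S1 ∪ S2) is nonempty, then the habitat of the diagrammatic negation of S1, namely (S2 \ S1) ∪ (X \ (M ∪ S1 ∪ S2)), is a strict subset of X \ S1; in particular, diagrammatic negation does not coincide with the complement of S1 in X. -/
/-- Non-Boolean character of diagrammatic negation: if `M \ (S1 ∪ S2)` is nonempty,
the habitat of the diagrammatic negation of `S1` is a strict subset of `X \ S1`. -/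
theorem diag_neg_ssubset_compl {U : Type*} (S1 S2 M X : Set U)
    (hS1M : S1 ⊆ M) (hS2M : S2 ⊆ M) (hMX : M ⊆ X) (hdisj : S1 ∩ S2 = ∅)
    (hne : (M \ (S1 ∪ S2)).Nonempty) :
    (S2 \ S1) ∪ (X \ (M ∪ S1 ∪ S2)) ⊂ X \ S1 := by
  obtain ⟨x, hxM, hxS⟩ := hne
  constructor
  · rintro y (⟨h2, h1⟩ | ⟨hX, hM⟩)
    · exact ⟨hMX (hS2M h2), h1⟩
    · exact ⟨hX, fun h1 => hM (Or.inl (Or.inl (hS1M h1)))⟩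
  · intro hsub
    have := hsub ⟨hMX hxM, fun h => hxS (Or.inl h)⟩
    rcases this with ⟨h2, _⟩ | ⟨_, hM⟩
    · exact hxS (Or.inr h2)
    · exact hM (Or.inl (Or.inl hxM))
end

section
/- Let S1, S2, M, X be subsets of a type with S1 ⊆ M, S2 ⊆ M, M ⊆ X and S1 ∩ S2 = ∅. If M \ (S1 ∪ S2) is nonempty, then the habitat of the diagrammatic negation of S2, namely (S1 \ S2) ∪ (X \ (M ∪ S1 ∪ S2)), is a strict subset of X \ S2. -/
/-- Dual instance: if `M \ (S1 ∪ S2)` is nonempty, the habitat of the diagrammatic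
negation of `S2` is a strict subset of `X \ S2`. -/
theorem diag_neg_ssubset_compl_dual {U : Type*} (S1 S2 M X : Set U)
    (hS1M : S1 ⊆ M) (hS2M : S2 ⊆ M) (hMX : M ⊆ X) (hdisj : S1 ∩ S2 = ∅)
    (hne : (M \ (S1 ∪ S2)).Nonempty) :
    (S1 \ S2) ∪ (X \ (M ∪ S1 ∪ S2)) ⊂ X \ S2 := by
  obtain ⟨x, hxM, hx12⟩ := hne
  constructor
  · rintro y (⟨h1, h2⟩ | ⟨hX, h⟩)
    · exact ⟨hMX (hS1M h1), h2⟩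
    · exact ⟨hX, fun h2 => h (Or.inr h2)⟩
  · intro hsub
    have := hsub ⟨hMX hxM, fun h2 => hx12 (Or.inr h2)⟩
    rcases this with ⟨h1, _⟩ | ⟨_, h⟩
    · exact hx12 (Or.inl h1)
    · exact h (Or.inl (Or.inl hxM))
end
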